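/- arXiv:2003.05168 — 2 statements merged into one kernel-verified Lean document; each statement's English description precedes it below -/
import Mathlib

section
/- Let n ≥ 1, let w_1, …, w_n ≥ 0, let θ_1, …, θ_n, θH be real rates, and let f be the associated multi-rate rate function. Let D > 0 and let k ∈ {1, …, n+1} be an earliest completion window for D, with R = θ_k if k ≤ n and R = θH if k = n+1. Then ∫_0^D f(s) ds = Σ_{j=1}^{k−1} θ_j·w_j + R·(D − W_{k−1}). Consequently, for reals C^L ≤ C^H, the inequality ∫_0^D f(s) ds ≥ C^H − C^L holds if and only if Σ_{j=1}^{k−1} θ_j·w_j + R·(D − W_{k−1}) ≥ C^H − C^L. -/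
/-!
The rate function is constant on each window `[W_j, W_{j+1})` and equal to `θH` beyond `W_n`,
so `∫_0^D f` splits at `W_{k-1}` into the full windows `1, …, k-1`, contributing `θ_j w_j`
each, and the partial window `(W_{k-1}, D)`, on which `f` is the constant `R`.
-/

/-- Total duration of the first `p` windows: `W_p = w_1 + ⋯ + w_p` (with `W_0 = 0`). -/
noncomputable def Wsum (w : ℕ → ℝ) (p : ℕ) : ℝ := ∑ j ∈ Finset.Icc 1 p, w j

/-- The multi-rate fluid rate function: `f s = θ j` for `W_{j-1} ≤ s < W_j`
(`1 ≤ j ≤ n`) and `f s = θH` for `s ≥ W_n`. -/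
noncomputable def rateFn (n : ℕ) (w θ : ℕ → ℝ) (θH : ℝ) (s : ℝ) : ℝ :=
  if s < Wsum w n then θ (sInf {j : ℕ | 1 ≤ j ∧ s < Wsum w j}) else θH

/-- `k ∈ {1, …, n+1}` is an earliest completion window for `D` if `W_{k-1} < D`
and, in case `k ≤ n`, also `W_k ≥ D`. -/
def ECW (n : ℕ) (w : ℕ → ℝ) (D : ℝ) (k : ℕ) : Prop :=
  1 ≤ k ∧ k ≤ n + 1 ∧ Wsum w (k - 1) < D ∧ (k ≤ n → D ≤ Wsum w k)

open Set MeasureTheory intervalIntegral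

section ConstOnIoo

variable {E : Type*} [NormedAddCommGroup E] {f : ℝ → E} {a b : ℝ} {c : E}

theorem IntervalIntegrable.of_eqOn_Ioo_const (hab : a ≤ b) (h : EqOn f (fun _ => c) (Ioo a b)) :
    IntervalIntegrable f volume a b :=
  intervalIntegrable_const.congr_uIoo (uIoo_of_le hab ▸ h.symm)

theorem intervalIntegral.integral_eq_of_eqOn_Ioo_const [NormedSpace ℝ E] [CompleteSpace E]
    (hab : a ≤ b) (h : EqOn f (fun _ => c) (Ioo a b)) : ∫ s in a..b, f s = (b - a) • c := by
  rw [integral_congr_Ioo_of_le hab h, integral_const]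

end ConstOnIoo

section Windows

variable {n : ℕ} {w : ℕ → ℝ}

theorem Wsum_zero (w : ℕ → ℝ) : Wsum w 0 = 0 := by
  simp [Wsum]

theorem Wsum_succ (w : ℕ → ℝ) (p : ℕ) : Wsum w (p + 1) = Wsum w p + w (p + 1) :=
  Finset.sum_Icc_succ_top (by omega) w

theorem Wsum_le_Wsum (hw : ∀ j, 1 ≤ j → j ≤ n → 0 ≤ w j) {a b : ℕ} (hab : a ≤ b)
    (hbn : b ≤ n) : Wsum w a ≤ Wsum w b := by
  refine Finset.sum_le_sum_of_subset_of_nonneg (Finset.Icc_subset_Icc le_rfl hab) ?_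
  intro i hi _
  exact hw i (Finset.mem_Icc.mp hi).1 ((Finset.mem_Icc.mp hi).2.trans hbn)

theorem rateFn_of_mem_Ico (θ : ℕ → ℝ) (θH : ℝ) (hw : ∀ j, 1 ≤ j → j ≤ n → 0 ≤ w j)
    {j : ℕ} (hj : j < n) {s : ℝ} (hs : s ∈ Ico (Wsum w j) (Wsum w (j + 1))) :
    rateFn n w θ θH s = θ (j + 1) := by
  have hsn : s < Wsum w n := hs.2.trans_le (Wsum_le_Wsum hw hj le_rfl)
  have hmem : j + 1 ∈ {i : ℕ | 1 ≤ i ∧ s < Wsum w i} := ⟨by omega, hs.2⟩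
  -- Windows `i ≤ j` end at `W_i ≤ W_j ≤ s`, so `j + 1` is the first window ending after `s`.
  have hfirst : sInf {i : ℕ | 1 ≤ i ∧ s < Wsum w i} = j + 1 := by
    refine le_antisymm (Nat.sInf_le hmem) (le_csInf ⟨_, hmem⟩ fun i hi => ?_)
    by_contra! hij
    exact (Wsum_le_Wsum hw (Nat.le_of_lt_succ hij) hj.le).trans hs.1 |>.not_gt hi.2
  rw [rateFn, if_pos hsn, hfirst]

theorem rateFn_of_le (θ : ℕ → ℝ) (θH : ℝ) {s : ℝ} (hs : Wsum w n ≤ s) :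
    rateFn n w θ θH s = θH :=
  if_neg hs.not_gt

theorem integral_rateFn_Wsum (θ : ℕ → ℝ) (θH : ℝ) (hw : ∀ j, 1 ≤ j → j ≤ n → 0 ≤ w j)
    {p : ℕ} (hp : p ≤ n) :
    IntervalIntegrable (rateFn n w θ θH) volume 0 (Wsum w p) ∧
      ∫ s in (0 : ℝ)..Wsum w p, rateFn n w θ θH s = ∑ j ∈ Finset.Icc 1 p, θ j * w j := by
  induction p with
  | zero => simp [Wsum_zero]
  | succ p ih =>
    obtain ⟨hint, hsum⟩ := ih (by omega)
    have hle : Wsum w p ≤ Wsum w (p + 1) := Wsum_le_Wsum hw p.le_succ hp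
    have hwindow :
        EqOn (rateFn n w θ θH) (fun _ => θ (p + 1)) (Ioo (Wsum w p) (Wsum w (p + 1))) :=
      fun s hs => rateFn_of_mem_Ico θ θH hw hp (Ioo_subset_Ico_self hs)
    have hint' := IntervalIntegrable.of_eqOn_Ioo_const hle hwindow
    refine ⟨hint.trans hint', ?_⟩
    rw [← integral_add_adjacent_intervals hint hint', hsum,
      integral_eq_of_eqOn_Ioo_const hle hwindow, Finset.sum_Icc_succ_top (by omega), Wsum_succ,
      smul_eq_mul]
    ring

end Windows

theorem stmt1_general (n : ℕ) (w θ : ℕ → ℝ)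
    (hw : ∀ j, 1 ≤ j → j ≤ n → 0 ≤ w j) (θH : ℝ)
    (D : ℝ) (k : ℕ) (hk : ECW n w D k)
    (R : ℝ) (hR : R = if k ≤ n then θ k else θH) :
    (∫ s in (0:ℝ)..D, rateFn n w θ θH s)
        = ∑ j ∈ Finset.Icc 1 (k - 1), θ j * w j + R * (D - Wsum w (k - 1))
    ∧ ∀ CL CH : ℝ, CL ≤ CH →
        ((CH - CL ≤ ∫ s in (0:ℝ)..D, rateFn n w θ θH s) ↔
          CH - CL ≤ ∑ j ∈ Finset.Icc 1 (k - 1), θ j * w j + R * (D - Wsum w (k - 1))) := by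
  obtain ⟨hk1, hkn, hWD, hDW⟩ := hk
  obtain ⟨m, rfl⟩ : ∃ m, k = m + 1 := ⟨k - 1, by omega⟩
  simp only [Nat.add_sub_cancel] at hWD ⊢
  obtain ⟨hint, hsum⟩ := integral_rateFn_Wsum θ θH hw (p := m) (by omega)
  have hlast : EqOn (rateFn n w θ θH) (fun _ => R) (Ioo (Wsum w m) D) := by
    intro s hs
    by_cases hm : m + 1 ≤ n
    · rw [hR, if_pos hm]
      exact rateFn_of_mem_Ico θ θH hw hm ⟨hs.1.le, hs.2.trans_le (hDW hm)⟩
    · obtain rfl : m = n := by omega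
      rw [hR, if_neg hm]
      exact rateFn_of_le θ θH hs.1.le
  have hmain : ∫ s in (0 : ℝ)..D, rateFn n w θ θH s
      = ∑ j ∈ Finset.Icc 1 m, θ j * w j + R * (D - Wsum w m) := by
    rw [← integral_add_adjacent_intervals hint
        (IntervalIntegrable.of_eqOn_Ioo_const hWD.le hlast), hsum,
      integral_eq_of_eqOn_Ioo_const hWD.le hlast, smul_eq_mul, mul_comm]
  exact ⟨hmain, fun CL CH _ => by rw [hmain]⟩

/-- Computational core of Theorem 1: `∫_0^D f = Σ_{j=1}^{k−1} θ_j·w_j + R·(D − W_{k−1})`,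
hence for `C^L ≤ C^H` the allocation `∫_0^D f` is at least `C^H − C^L` iff
`Σ_{j=1}^{k−1} θ_j·w_j + R·(D − W_{k−1}) ≥ C^H − C^L`. -/
theorem stmt1 (n : ℕ) (hn : 1 ≤ n) (w θ : ℕ → ℝ)
    (hw : ∀ j, 1 ≤ j → j ≤ n → 0 ≤ w j) (θH : ℝ)
    (D : ℝ) (hD : 0 < D) (k : ℕ) (hk : ECW n w D k)
    (R : ℝ) (hR : R = if k ≤ n then θ k else θH) :
    (∫ s in (0:ℝ)..D, rateFn n w θ θH s)
        = ∑ j ∈ Finset.Icc 1 (k - 1), θ j * w j + R * (D - Wsum w (k - 1))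
    ∧ ∀ CL CH : ℝ, CL ≤ CH →
        ((CH - CL ≤ ∫ s in (0:ℝ)..D, rateFn n w θ θH s) ↔
          CH - CL ≤ ∑ j ∈ Finset.Icc 1 (k - 1), θ j * w j + R * (D - Wsum w (k - 1))) :=
  stmt1_general n w θ hw θH D k hk R hR
end

section
/- Let T > 0 and 0 < C^L ≤ C^H be reals, set u^L = C^L/T and u^H = C^H/T, and let θ^L > 0, θ^H > 0 be rates. Let n ≥ 1, let w_1, …, w_n ≥ 0, set the transition rates θ_j := θ^H for all 1 ≤ j ≤ n and the stable rate θH := θ^H, set D = T − C^L/θ^L, and let k ∈ {1, …, n+1} be an earliest completion window for D, with R = θ_k if k ≤ n and R = θH if k = n+1. Then the conjunction of the multi-rate HI-task conditions — (8) Σ_{j=1}^{k−1} θ_j·w_j + R·(D − W_{k−1}) ≥ C^H − C^L; (9) θ_j ≥ θ^L for all k ≤ j ≤ n; (10) θH ≥ θ^L; (12) Σ_{j=1}^{k−1} θ_j·w_j ≥ u^H·W_{k−1}; (13) θ_j ≤ θ_{j+1} for all 1 ≤ j < k with j+1 ≤ n; (14) θ_j ≥ u^H for all k ≤ j ≤ n;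 (15) θH ≥ u^H — holds if and only if u^L/θ^L + (u^H − u^L)/θ^H ≤ 1 and θ^L ≤ θ^H. -/
lemma Wsum_nonneg {p : ℕ} {w : ℕ → ℝ} (hw : ∀ j, 1 ≤ j → j ≤ p → 0 ≤ w j) : 0 ≤ Wsum w p :=
  Finset.sum_nonneg fun j hj => hw j (Finset.mem_Icc.1 hj).1 (Finset.mem_Icc.1 hj).2

lemma sum_mul_eq_mul_Wsum {p : ℕ} {w θ : ℕ → ℝ} {c : ℝ} (hθ : ∀ j, 1 ≤ j → j ≤ p → θ j = c) :
    ∑ j ∈ Finset.Icc 1 p, θ j * w j = c * Wsum w p := by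
  rw [Wsum, Finset.mul_sum]
  exact Finset.sum_congr rfl fun j hj => by
    rw [hθ j (Finset.mem_Icc.1 hj).1 (Finset.mem_Icc.1 hj).2]

lemma dualRate_utilization_le_one_iff {T CL CH θL θHI : ℝ} (hT : 0 < T) (hθHI : 0 < θHI) :
    CL / T / θL + (CH / T - CL / T) / θHI ≤ 1 ↔ CH - CL ≤ θHI * (T - CL / θL) := by
  have hsplit : CL / T / θL + (CH / T - CL / T) / θHI = (CL / θL + (CH - CL) / θHI) / T := by
    rw [← sub_div, div_div, div_div, add_div, div_div, div_div, mul_comm T θL, mul_comm T θHI]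
  rw [hsplit, div_le_one hT, ← le_sub_iff_add_le', div_le_iff₀' hθHI]

lemma le_of_dualRate_utilization_le_one {uL uH θL θHI : ℝ} (huL : 0 ≤ uL) (hθL : 0 < θL)
    (hθLH : θL ≤ θHI) (h : uL / θL + (uH - uL) / θHI ≤ 1) : uH ≤ θHI := by
  have hθHI : 0 < θHI := hθL.trans_le hθLH
  have hslower : uL / θHI ≤ uL / θL := div_le_div_of_nonneg_left huL hθL hθLH
  rw [← div_le_one hθHI]
  calc uH / θHI = uL / θHI + (uH - uL) / θHI := by rw [← add_div, add_sub_cancel]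
    _ ≤ 1 := by linarith

theorem stmt5_general (T CL CH uL uH θL θHI : ℝ)
    (hT : 0 < T) (hCL : 0 < CL)
    (huL : uL = CL / T) (huH : uH = CH / T)
    (hθL : 0 < θL) (hθHI : 0 < θHI)
    (n : ℕ) (w : ℕ → ℝ) (hw : ∀ j, 1 ≤ j → j ≤ n → 0 ≤ w j)
    (θ : ℕ → ℝ) (hθ : ∀ j, 1 ≤ j → j ≤ n → θ j = θHI)
    (θH : ℝ) (hθH : θH = θHI)
    (D : ℝ) (hDdef : D = T - CL / θL)
    (k : ℕ) (hk : ECW n w D k)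
    (R : ℝ) (hR : R = if k ≤ n then θ k else θH) :
    ((CH - CL ≤ ∑ j ∈ Finset.Icc 1 (k - 1), θ j * w j + R * (D - Wsum w (k - 1))) ∧
      (∀ j, k ≤ j → j ≤ n → θL ≤ θ j) ∧
      (θL ≤ θH) ∧
      (uH * Wsum w (k - 1) ≤ ∑ j ∈ Finset.Icc 1 (k - 1), θ j * w j) ∧
      (∀ j, 1 ≤ j → j < k → j + 1 ≤ n → θ j ≤ θ (j + 1)) ∧
      (∀ j, k ≤ j → j ≤ n → uH ≤ θ j) ∧
      (uH ≤ θH)) ↔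
    (uL / θL + (uH - uL) / θHI ≤ 1 ∧ θL ≤ θHI) := by
  obtain ⟨hk1, hkn, -, -⟩ := hk
  have hRθ : R = θHI := by
    rw [hR]
    split_ifs with h
    exacts [hθ k hk1 h, hθH]
  have hsum : ∑ j ∈ Finset.Icc 1 (k - 1), θ j * w j = θHI * Wsum w (k - 1) :=
    sum_mul_eq_mul_Wsum fun j hj1 hj => hθ j hj1 (by omega)
  have hW : 0 ≤ Wsum w (k - 1) := Wsum_nonneg fun j hj1 hj => hw j hj1 (by omega)
  have h8 : CH - CL ≤ θHI * Wsum w (k - 1) + θHI * (D - Wsum w (k - 1)) ↔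
      uL / θL + (uH - uL) / θHI ≤ 1 := by
    rw [← mul_add, add_sub_cancel, hDdef, huL, huH, dualRate_utilization_le_one_iff hT hθHI]
  rw [hsum, hRθ, h8, hθH]
  constructor
  · rintro ⟨hdual, -, hθLH, -⟩
    exact ⟨hdual, hθLH⟩
  · rintro ⟨hdual, hθLH⟩
    have huHθ : uH ≤ θHI :=
      le_of_dualRate_utilization_le_one (huL ▸ div_nonneg hCL.le hT.le) hθL hθLH hdual
    refine ⟨hdual, fun j hkj hjn => ?_, hθLH, mul_le_mul_of_nonneg_right huHθ hW,
      fun j hj1 _ hjn => ?_, fun j hkj hjn => ?_, huHθ⟩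
    · exact (hθ j (hk1.trans hkj) hjn).symm ▸ hθLH
    · rw [hθ j hj1 (by omega), hθ (j + 1) (by omega) hjn]
    · exact (hθ j (hk1.trans hkj) hjn).symm ▸ huHθ

/-- Per-task core of **Lemma 2** (dual-rate generalization): when all transition rates
`θ_j` and the stable rate `θH` of a HI-task equal its dual HI-mode rate `θ^H`, the
multi-rate HI-task conditions (8), (9), (10), (12), (13), (14), (15) hold iff the
dual-rate conditions `u^L/θ^L + (u^H − u^L)/θ^H ≤ 1` and `θ^L ≤ θ^H` hold. -/
theorem stmt5 (T CL CH uL uH θL θHI : ℝ)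
    (hT : 0 < T) (hCL : 0 < CL) (hCLH : CL ≤ CH)
    (huL : uL = CL / T) (huH : uH = CH / T)
    (hθL : 0 < θL) (hθHI : 0 < θHI)
    (n : ℕ) (hn : 1 ≤ n) (w : ℕ → ℝ) (hw : ∀ j, 1 ≤ j → j ≤ n → 0 ≤ w j)
    (θ : ℕ → ℝ) (hθ : ∀ j, 1 ≤ j → j ≤ n → θ j = θHI)
    (θH : ℝ) (hθH : θH = θHI)
    (D : ℝ) (hDdef : D = T - CL / θL)
    (k : ℕ) (hk : ECW n w D k)
    (R : ℝ) (hR : R = if k ≤ n then θ k else θH) :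
    ((CH - CL ≤ ∑ j ∈ Finset.Icc 1 (k - 1), θ j * w j + R * (D - Wsum w (k - 1))) ∧
      (∀ j, k ≤ j → j ≤ n → θL ≤ θ j) ∧
      (θL ≤ θH) ∧
      (uH * Wsum w (k - 1) ≤ ∑ j ∈ Finset.Icc 1 (k - 1), θ j * w j) ∧
      (∀ j, 1 ≤ j → j < k → j + 1 ≤ n → θ j ≤ θ (j + 1)) ∧
      (∀ j, k ≤ j → j ≤ n → uH ≤ θ j) ∧
      (uH ≤ θH)) ↔
    (uL / θL + (uH - uL) / θHI ≤ 1 ∧ θL ≤ θHI) :=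
  stmt5_general T CL CH uL uH θL θHI hT hCL huL huH hθL hθHI n w hw θ hθ θH hθH D hDdef k hk R hR
end
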